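/- For the complete graph K_n and a positive semidefinite d×d matrix A, the parameter 𝓔₁(K_n; A) := inf{ ∑_{i} u_iᵀ A u_i : u is a unit-distance representation of K_n in ℝ^d } equals (1/2)·∑_{i=1}^{n−1} λ_i^↑(A) when d ≥ n−1 (where λ_1^↑ ≤ ⋯ ≤ λ_d^↑ are the eigenvalues of A in nondecreasing order), and equals +∞ when d < n−1. -/

import Mathlib

/-!
Centring a unit-distance representation `u` of `Kₙ` at its centroid does not increase
`∑ᵢ uᵢᵀ A uᵢ` (as `A ⪰ 0`) and yields vectors `vᵢ` with Gram matrix `(I - J / n) / 2`. Hence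
`∑ᵢ ⟪vᵢ, w⟫² ≤ ‖w‖² / 2` for every `w`, while `∑ᵢ ‖vᵢ‖² = (n - 1) / 2`. In an orthonormal
eigenbasis `eₖ` of `A` the weights `tₖ = ∑ᵢ ⟪vᵢ, eₖ⟫²` therefore lie in `[0, 1/2]` and sum to
`(n - 1) / 2`: this forces `n - 1 ≤ d`, and `∑ₖ λₖ tₖ` is smallest when weight `1/2` sits on the
`n - 1` smallest eigenvalues. That bound is attained by a centred regular simplex placed in the
span of the corresponding eigenvectors.
-/

open scoped RealInnerProductSpace

def IsUnitDistRep {V : Type*} (G : SimpleGraph V) {d : ℕ}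
    (u : V → EuclideanSpace ℝ (Fin d)) : Prop :=
  ∀ i j, G.Adj i j → ‖u i - u j‖ = 1

def IsHypersphereRep {V : Type*} (G : SimpleGraph V) {d : ℕ}
    (u : V → EuclideanSpace ℝ (Fin d)) (t : ℝ) : Prop :=
  IsUnitDistRep G u ∧ ∀ i, ‖u i‖ ^ 2 = t

noncomputable def hypersphereNumber {V : Type*} (G : SimpleGraph V) : ℝ :=
  sInf {t | ∃ (d : ℕ) (u : V → EuclideanSpace ℝ (Fin d)), IsHypersphereRep G u t}

open Matrix

/-- The objective `∑ᵢ uᵢᵀ A uᵢ`. -/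
noncomputable def quadSum {n d : ℕ} (A : Matrix (Fin d) (Fin d) ℝ)
    (u : Fin n → EuclideanSpace ℝ (Fin d)) : ℝ :=
  ∑ i, dotProduct (WithLp.equiv 2 (Fin d → ℝ) (u i))
    (A *ᵥ WithLp.equiv 2 (Fin d → ℝ) (u i))

section CenteredSimplex

variable {E ι : Type*} [NormedAddCommGroup E] [InnerProductSpace ℝ E] [Fintype ι]

lemma sum_sub_smul_sum_eq_zero (u : ι → E) :
    ∑ i, (u i - (Fintype.card ι : ℝ)⁻¹ • ∑ j, u j) = 0 := by
  rcases isEmpty_or_nonempty ι with hι | hι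
  · simp
  rw [Finset.sum_sub_distrib, Finset.sum_const, Finset.card_univ, ← Nat.cast_smul_eq_nsmul ℝ,
    smul_smul, mul_inv_cancel₀ (by positivity), one_smul, sub_self]

lemma sum_inner_sub_smul_sum_sq_le (u : ι → E) (w : E) :
    ∑ i, ⟪u i - (Fintype.card ι : ℝ)⁻¹ • ∑ j, u j, w⟫ ^ 2 ≤ ∑ i, ⟪u i, w⟫ ^ 2 := by
  set c := (Fintype.card ι : ℝ)⁻¹ • ∑ j, u j
  have h0 : ∑ i, ⟪u i - c, w⟫ = 0 := by
    rw [← sum_inner, sum_sub_smul_sum_eq_zero, inner_zero_left]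
  have hsplit : ∑ i, ⟪u i, w⟫ ^ 2
      = ∑ i, ⟪u i - c, w⟫ ^ 2 + 2 * ⟪c, w⟫ * ∑ i, ⟪u i - c, w⟫ + ∑ _i : ι, ⟪c, w⟫ ^ 2 := by
    rw [Finset.mul_sum, ← Finset.sum_add_distrib, ← Finset.sum_add_distrib]
    refine Finset.sum_congr rfl fun i _ => ?_
    rw [inner_sub_left]
    ring
  rw [hsplit, h0, mul_zero, add_zero]
  exact le_add_of_nonneg_right (Finset.sum_nonneg fun _ _ => sq_nonneg _)

lemma sum_inner_sq_le_of_norm_sum_smul_sq_le {v : ι → E} {C : ℝ} (hC0 : 0 ≤ C)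
    (hC : ∀ a : ι → ℝ, ‖∑ i, a i • v i‖ ^ 2 ≤ C * ∑ i, a i ^ 2) (w : E) :
    ∑ i, ⟪v i, w⟫ ^ 2 ≤ C * ‖w‖ ^ 2 := by
  set f := ∑ i, ⟪v i, w⟫ ^ 2
  set m := ∑ i, ⟪v i, w⟫ • v i
  have hmw : ⟪m, w⟫ = f := by simp only [m, f, sum_inner, real_inner_smul_left, sq]
  have hf : f ^ 2 ≤ C * f * ‖w‖ ^ 2 := calc
    f ^ 2 = ⟪m, w⟫ ^ 2 := by rw [hmw]
    _ ≤ ‖m‖ ^ 2 * ‖w‖ ^ 2 := by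
      rw [← mul_pow]; exact sq_le_sq' (neg_le_of_abs_le (abs_real_inner_le_norm m w))
        (real_inner_le_norm m w)
    _ ≤ C * f * ‖w‖ ^ 2 := by gcongr; exact hC _
  have hf0 : 0 ≤ f := Finset.sum_nonneg fun i _ => sq_nonneg _
  rcases hf0.eq_or_lt with h0 | hpos
  · rw [← h0]; positivity
  · nlinarith

variable [DecidableEq ι] {v : ι → E} (hv0 : ∑ i, v i = 0)
  (hv : Pairwise fun i j => ‖v i - v j‖ = 1)
include hv0 hv

lemma inner_eq_of_sum_eq_zero (i j : ι) :
    ⟪v i, v j⟫ = ((if i = j then 1 else 0) - (Fintype.card ι : ℝ)⁻¹) / 2 := by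
  have hpol : ∀ a b, ⟪v a, v b⟫ = (‖v a‖ ^ 2 + ‖v b‖ ^ 2 - 1 + if a = b then 1 else 0) / 2 := by
    intro a b
    by_cases hab : a = b
    · subst hab; simp
    · have := norm_sub_sq_real (v a) (v b)
      rw [hv hab] at this
      simp only [hab, if_false]; linarith
  set n : ℝ := (Fintype.card ι : ℝ)
  have hn : n ≠ 0 := Nat.cast_ne_zero.mpr (Fintype.card_pos_iff.mpr ⟨i⟩).ne'
  set S := ∑ b, ‖v b‖ ^ 2
  -- each row of the Gram matrix sums to `⟪v a, ∑ b, v b⟫ = 0`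
  have hrow : ∀ a, n * ‖v a‖ ^ 2 + S - n + 1 = 0 := by
    intro a
    have h := congrArg (⟪v a, ·⟫) hv0
    simp only [inner_sum, inner_zero_right, hpol, ← Finset.sum_div, Finset.sum_add_distrib,
      Finset.sum_sub_distrib, Finset.sum_ite_eq, Finset.mem_univ, if_true, Finset.sum_const,
      Finset.card_univ, nsmul_eq_mul] at h
    linarith
  have hS : 2 * S = n - 1 := by
    have h := Finset.sum_congr rfl fun a (_ : a ∈ Finset.univ) => hrow a
    simp only [Finset.sum_add_distrib, Finset.sum_sub_distrib, ← Finset.mul_sum, Finset.sum_const,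
      Finset.card_univ, nsmul_eq_mul] at h
    exact (mul_left_cancel₀ hn (by linarith : n * (2 * S) = n * (n - 1)))
  have hnorm : ∀ a, ‖v a‖ ^ 2 = (n - 1) / (2 * n) := fun a => by
    field_simp; linarith [hrow a]
  rw [hpol, hnorm, hnorm]
  field_simp
  ring

lemma norm_sum_smul_sq_le_of_sum_eq_zero (a : ι → ℝ) :
    ‖∑ i, a i • v i‖ ^ 2 ≤ 1 / 2 * ∑ i, a i ^ 2 := by
  have h : ‖∑ i, a i • v i‖ ^ 2
      = 1 / 2 * ∑ i, a i ^ 2 - (∑ i, a i) ^ 2 / (2 * Fintype.card ι) := by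
    have hterm : ∀ i j, a i * (a j * ⟪v j, v i⟫)
        = (if j = i then a i ^ 2 / 2 else 0) - a i * a j / (2 * Fintype.card ι) := by
      intro i j
      rw [inner_eq_of_sum_eq_zero hv0 hv]
      split_ifs with h
      · subst h; ring
      · ring
    rw [← real_inner_self_eq_norm_sq]
    simp only [sum_inner, inner_sum, real_inner_smul_left, real_inner_smul_right, hterm,
      Finset.sum_sub_distrib, Finset.sum_ite_eq', Finset.mem_univ, if_true]
    simp only [← Finset.sum_div, ← Finset.mul_sum, ← Finset.sum_mul]
    ring
  rw [h]
  have : 0 ≤ (∑ i, a i) ^ 2 / (2 * Fintype.card ι) := by positivity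
  linarith

lemma sum_inner_sq_le_of_sum_eq_zero (w : E) : ∑ i, ⟪v i, w⟫ ^ 2 ≤ 1 / 2 * ‖w‖ ^ 2 :=
  sum_inner_sq_le_of_norm_sum_smul_sq_le (by norm_num)
    (norm_sum_smul_sq_le_of_sum_eq_zero hv0 hv) w

lemma sum_norm_sq_eq_of_sum_eq_zero : ∑ i, ‖v i‖ ^ 2 = ((Fintype.card ι - 1 : ℕ) : ℝ) / 2 := by
  rcases isEmpty_or_nonempty ι with hι | hι
  · simp
  simp only [← real_inner_self_eq_norm_sq, inner_eq_of_sum_eq_zero hv0 hv, if_true,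
    Finset.sum_const, Finset.card_univ, nsmul_eq_mul]
  rw [Nat.cast_sub Fintype.card_pos]
  field_simp
  ring

lemma sum_sum_inner_sq_eq_of_sum_eq_zero {κ : Type*} [Fintype κ] (b : OrthonormalBasis κ ℝ E) :
    ∑ k, ∑ i, ⟪v i, b k⟫ ^ 2 = ((Fintype.card ι - 1 : ℕ) : ℝ) / 2 := by
  rw [Finset.sum_comm]
  simp only [b.sum_sq_inner_left]
  exact sum_norm_sq_eq_of_sum_eq_zero hv0 hv

end CenteredSimplex

section SimplexDimension

variable {E ι : Type*} [NormedAddCommGroup E] [InnerProductSpace ℝ E] [Fintype ι]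

lemma card_sub_one_le_finrank [FiniteDimensional ℝ E] {u : ι → E}
    (hu : Pairwise fun i j => ‖u i - u j‖ = 1) : Fintype.card ι - 1 ≤ Module.finrank ℝ E := by
  classical
  set v := fun i => u i - (Fintype.card ι : ℝ)⁻¹ • ∑ k, u k
  have hv : Pairwise fun i j => ‖v i - v j‖ = 1 := fun i j hij => by simpa [v] using hu hij
  set b := stdOrthonormalBasis ℝ E
  have h : ((Fintype.card ι - 1 : ℕ) : ℝ) / 2 ≤ (Module.finrank ℝ E : ℝ) / 2 := calc
    ((Fintype.card ι - 1 : ℕ) : ℝ) / 2 = ∑ k, ∑ i, ⟪v i, b k⟫ ^ 2 :=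
      (sum_sum_inner_sq_eq_of_sum_eq_zero (sum_sub_smul_sum_eq_zero u) hv b).symm
    _ ≤ ∑ _k : Fin (Module.finrank ℝ E), (1 / 2 : ℝ) := Finset.sum_le_sum fun k _ => by
      simpa [b.orthonormal.1 k] using
        sum_inner_sq_le_of_sum_eq_zero (sum_sub_smul_sum_eq_zero u) hv (b k)
    _ = (Module.finrank ℝ E : ℝ) / 2 := by simp [div_eq_mul_inv]
  exact_mod_cast (by linarith : ((Fintype.card ι - 1 : ℕ) : ℝ) ≤ Module.finrank ℝ E)

lemma exists_sum_eq_zero_pairwise_norm_sub_eq_one [DecidableEq ι] [FiniteDimensional ℝ E]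
    (hE : Module.finrank ℝ E = Fintype.card ι - 1) :
    ∃ v : ι → E, ∑ i, v i = 0 ∧ Pairwise fun i j => ‖v i - v j‖ = 1 := by
  rcases isEmpty_or_nonempty ι with hι | hι
  · exact ⟨isEmptyElim, by simp, fun i => isEmptyElim i⟩
  -- centre the scaled standard simplex `eᵢ / √2` of `ℝ^ι`: it lies in the hyperplane `𝟙ᗮ`,
  -- which is isometric to `E`
  set x : ι → EuclideanSpace ℝ ι := fun i => EuclideanSpace.single i (√2)⁻¹
  set w := fun i => x i - (Fintype.card ι : ℝ)⁻¹ • ∑ j, x j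
  set o : EuclideanSpace ℝ ι := WithLp.toLp 2 fun _ => 1
  set P := (ℝ ∙ o)ᗮ
  have hwP : ∀ i, w i ∈ P := fun i => by
    rw [Submodule.mem_orthogonal_singleton_iff_inner_right]
    simp only [w, x, o, inner_sub_right, real_inner_smul_right, inner_sum,
      EuclideanSpace.inner_single_right, Finset.sum_const, Finset.card_univ, nsmul_eq_mul]
    field_simp
    simp
  have hP : Module.finrank ℝ P = Module.finrank ℝ E := by
    have ho : o ≠ 0 := fun h => by simpa [o] using congrArg (· (Classical.arbitrary ι)) h
    have := Submodule.finrank_add_finrank_orthogonal (ℝ ∙ o)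
    rw [finrank_span_singleton ho, finrank_euclideanSpace] at this
    change 1 + Module.finrank ℝ P = _ at this
    omega
  let φ : P ≃ₗᵢ[ℝ] E := (stdOrthonormalBasis ℝ P).repr.trans
    ((stdOrthonormalBasis ℝ E).reindex (finCongr hP.symm)).repr.symm
  refine ⟨fun i => φ ⟨w i, hwP i⟩, ?_, fun i j hij => ?_⟩
  · rw [← map_sum, ← φ.map_zero]
    congr 1
    ext1
    simpa [w] using sum_sub_smul_sum_eq_zero x
  · show ‖φ _ - φ _‖ = 1
    rw [← map_sub, φ.norm_map]
    change ‖w i - w j‖ = 1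
    have h2 : ‖x i - x j‖ ^ 2 = 1 := by
      rw [norm_sub_sq_real]
      simp [x, EuclideanSpace.inner_single_left, Ne.symm hij]
      norm_num
    simpa only [w, sub_sub_sub_cancel_right] using
      (pow_eq_one_iff_of_nonneg (norm_nonneg _) two_ne_zero).mp h2

end SimplexDimension

lemma isUnitDistRep_completeGraph_iff {V : Type*} {d : ℕ} {u : V → EuclideanSpace ℝ (Fin d)} :
    IsUnitDistRep (SimpleGraph.completeGraph V) u ↔ Pairwise fun i j => ‖u i - u j‖ = 1 :=
  ⟨fun h _ _ hij => h _ _ hij, fun h _ _ hij => h hij⟩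

lemma sum_lt_le_sum_mul_of_monotone {d m : ℕ} {s t : Fin d → ℝ} (hs : Monotone s)
    (ht0 : ∀ k, 0 ≤ t k) (ht1 : ∀ k, t k ≤ 1) (hsum : ∑ k, t k = m) :
    ∑ k : Fin d, (if (k : ℕ) < m then s k else 0) ≤ ∑ k, s k * t k := by
  have hm : m ≤ d := by
    have : (m : ℝ) ≤ d := by simpa [hsum] using Finset.sum_le_sum fun k (_ : k ∈ Finset.univ) => ht1 k
    exact_mod_cast this
  rcases d with _ | d
  · simp
  -- compare both sides against the threshold `θ = s (m - 1)`
  set θ := s ⟨m - 1, by omega⟩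
  have hpt : ∀ k, θ * (t k - if (k : ℕ) < m then 1 else 0)
      ≤ s k * t k - if (k : ℕ) < m then s k else 0 := by
    intro k
    split_ifs with hk
    · have : s k ≤ θ := hs (Fin.le_def.mpr (by simp; omega))
      nlinarith [ht1 k]
    · have : θ ≤ s k := hs (Fin.le_def.mpr (by simp; omega))
      nlinarith [ht0 k]
  have hcount : ∑ k : Fin (d + 1), (if (k : ℕ) < m then (1 : ℝ) else 0) = m := by
    rw [Finset.sum_boole, Fin.card_filter_val_lt, min_eq_right hm]
  have := Finset.sum_le_sum fun k (_ : k ∈ Finset.univ) => hpt k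
  rw [← Finset.mul_sum, Finset.sum_sub_distrib, Finset.sum_sub_distrib, hsum, hcount,
    sub_self, mul_zero] at this
  linarith

lemma dotProduct_mulVec_eq_sum_eigenvalues {m : Type*} [Fintype m] [DecidableEq m]
    {A : Matrix m m ℝ} (hA : A.IsHermitian) (x : EuclideanSpace ℝ m) :
    WithLp.equiv 2 (m → ℝ) x ⬝ᵥ (A *ᵥ WithLp.equiv 2 (m → ℝ) x)
      = ∑ k, hA.eigenvalues k * ⟪x, hA.eigenvectorBasis k⟫ ^ 2 := by
  have hAx : A *ᵥ WithLp.equiv 2 (m → ℝ) x = ∑ k, (⟪hA.eigenvectorBasis k, x⟫ * hA.eigenvalues k)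
      • WithLp.equiv 2 (m → ℝ) (hA.eigenvectorBasis k) := by
    conv_lhs => rw [← hA.eigenvectorBasis.sum_repr' x]
    simp [Matrix.mulVec_sum, Matrix.mulVec_smul, hA.mulVec_eigenvectorBasis, smul_smul]
  rw [hAx, dotProduct_sum]
  refine Finset.sum_congr rfl fun k _ => ?_
  rw [dotProduct_smul, smul_eq_mul, real_inner_comm (hA.eigenvectorBasis k) x]
  have : WithLp.equiv 2 (m → ℝ) x ⬝ᵥ WithLp.equiv 2 (m → ℝ) (hA.eigenvectorBasis k)
      = ⟪hA.eigenvectorBasis k, x⟫ := by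
    rw [EuclideanSpace.inner_eq_star_dotProduct]; simp
  rw [this]
  ring

section Spectral

variable {n d : ℕ} {A : Matrix (Fin d) (Fin d) ℝ}

lemma quadSum_eq_sum_sorted (hA : A.IsHermitian) (u : Fin n → EuclideanSpace ℝ (Fin d)) :
    quadSum A u = ∑ j, hA.eigenvalues (Tuple.sort hA.eigenvalues j)
      * ∑ i, ⟪u i, hA.eigenvectorBasis.reindex (Tuple.sort hA.eigenvalues).symm j⟫ ^ 2 := by
  simp only [quadSum, dotProduct_mulVec_eq_sum_eigenvalues hA, Finset.mul_sum,
    OrthonormalBasis.reindex_apply, Equiv.symm_symm]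
  rw [Finset.sum_comm]
  exact (Equiv.sum_comp (Tuple.sort hA.eigenvalues) _).symm

lemma le_quadSum (hA : A.PosSemidef) {u : Fin n → EuclideanSpace ℝ (Fin d)}
    (hu : Pairwise fun i j => ‖u i - u j‖ = 1) :
    1 / 2 * ∑ j : Fin d, (if (j : ℕ) < n - 1 then
        hA.isHermitian.eigenvalues (Tuple.sort hA.isHermitian.eigenvalues j) else 0)
      ≤ quadSum A u := by
  set σ := Tuple.sort hA.isHermitian.eigenvalues
  set μ := fun j => hA.isHermitian.eigenvalues (σ j)
  set f := hA.isHermitian.eigenvectorBasis.reindex σ.symm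
  set v := fun i => u i - (Fintype.card (Fin n) : ℝ)⁻¹ • ∑ k, u k
  have hv0 : ∑ i, v i = 0 := sum_sub_smul_sum_eq_zero u
  have hv : Pairwise fun i j => ‖v i - v j‖ = 1 := fun i j hij => by simpa [v] using hu hij
  set t := fun j => ∑ i, ⟪v i, f j⟫ ^ 2
  have ht : ∀ j, 2 * t j ≤ 1 := fun j => by
    have := sum_inner_sq_le_of_sum_eq_zero hv0 hv (f j)
    rw [f.orthonormal.1 j] at this
    linarith
  have hsum : ∑ j, 2 * t j = ((n - 1 : ℕ) : ℝ) := by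
    rw [← Finset.mul_sum, sum_sum_inner_sq_eq_of_sum_eq_zero hv0 hv f, Fintype.card_fin]
    ring
  calc 1 / 2 * ∑ j : Fin d, (if (j : ℕ) < n - 1 then μ j else 0)
      ≤ 1 / 2 * ∑ j, μ j * (2 * t j) := by
        refine mul_le_mul_of_nonneg_left ?_ (by norm_num)
        exact sum_lt_le_sum_mul_of_monotone (Tuple.monotone_sort hA.isHermitian.eigenvalues)
          (fun j => by positivity) ht hsum
    _ = ∑ j, μ j * t j := by rw [Finset.mul_sum]; ring_nf
    _ ≤ ∑ j, μ j * ∑ i, ⟪u i, f j⟫ ^ 2 := by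
        gcongr with j
        · exact hA.eigenvalues_nonneg _
        · exact sum_inner_sub_smul_sum_sq_le u (f j)
    _ = quadSum A u := (quadSum_eq_sum_sorted hA.isHermitian u).symm

lemma exists_quadSum_le (hA : A.PosSemidef) (hnd : n - 1 ≤ d) :
    ∃ u : Fin n → EuclideanSpace ℝ (Fin d), (Pairwise fun i j => ‖u i - u j‖ = 1) ∧
      quadSum A u ≤ 1 / 2 * ∑ j : Fin d, (if (j : ℕ) < n - 1 then
        hA.isHermitian.eigenvalues (Tuple.sort hA.isHermitian.eigenvalues j) else 0) := by
  set σ := Tuple.sort hA.isHermitian.eigenvalues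
  set f := hA.isHermitian.eigenvectorBasis.reindex σ.symm
  set W := Submodule.span ℝ (Set.range (f ∘ Subtype.val : {j : Fin d // (j : ℕ) < n - 1} → _))
  have hW : Module.finrank ℝ W = Fintype.card (Fin n) - 1 := by
    rw [finrank_span_eq_card (f.orthonormal.linearIndependent.comp _ Subtype.val_injective),
      Fintype.card_subtype, Fin.card_filter_val_lt, Fintype.card_fin]
    omega
  obtain ⟨v, hv0, hv⟩ := exists_sum_eq_zero_pairwise_norm_sub_eq_one hW
  have hW0 : ∀ i (j : Fin d), ¬ (j : ℕ) < n - 1 → ⟪(v i : EuclideanSpace ℝ (Fin d)), f j⟫ = 0 := by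
    intro i j hj
    have hWj : W ≤ (ℝ ∙ f j)ᗮ := Submodule.span_le.mpr <| Set.range_subset_iff.mpr fun j' =>
      Submodule.mem_orthogonal_singleton_iff_inner_right.mpr
        (f.orthonormal.2 fun h => hj (by rw [h]; exact j'.2))
    rw [real_inner_comm]
    exact Submodule.mem_orthogonal_singleton_iff_inner_right.mp (hWj (v i).2)
  have hvE : Pairwise fun i j => ‖(v i : EuclideanSpace ℝ (Fin d)) - v j‖ = 1 := hv
  have hvE0 : ∑ i, (v i : EuclideanSpace ℝ (Fin d)) = 0 := by
    rw [← Submodule.coe_sum, hv0, Submodule.coe_zero]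
  refine ⟨fun i => v i, hvE, ?_⟩
  rw [quadSum_eq_sum_sorted hA.isHermitian, Finset.mul_sum]
  refine Finset.sum_le_sum fun j _ => ?_
  split_ifs with hj
  · have := sum_inner_sq_le_of_sum_eq_zero hvE0 hvE (f j)
    rw [f.orthonormal.1 j] at this
    nlinarith [hA.eigenvalues_nonneg (σ j)]
  · rw [Finset.sum_eq_zero fun i _ => by rw [hW0 i j hj, sq, mul_zero]]
    simp

end Spectral

/-- `𝓔₁(Kₙ; A) = (1/2) ∑_{i=1}^{n−1} λ_i^↑(A)` when `d ≥ n − 1`, and `+∞`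
(no unit-distance representation exists) when `d < n − 1`. -/
theorem ellipsoid_one_completeGraph (n d : ℕ) (A : Matrix (Fin d) (Fin d) ℝ)
    (hA : A.PosSemidef) :
    (n - 1 ≤ d →
      sInf {r : ℝ | ∃ u : Fin n → EuclideanSpace ℝ (Fin d),
          IsUnitDistRep (SimpleGraph.completeGraph (Fin n)) u ∧ r = quadSum A u}
        = 1 / 2 * ∑ i : Fin d, if (i : ℕ) < n - 1 then
            hA.isHermitian.eigenvalues (Tuple.sort hA.isHermitian.eigenvalues i) else 0) ∧
    (d < n - 1 → ∀ u : Fin n → EuclideanSpace ℝ (Fin d),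
      ¬ IsUnitDistRep (SimpleGraph.completeGraph (Fin n)) u) := by
  refine ⟨fun hnd => ?_, fun hdn u hu => ?_⟩
  · obtain ⟨u₀, hu₀, hle⟩ := exists_quadSum_le hA hnd
    set S := {r : ℝ | ∃ u : Fin n → EuclideanSpace ℝ (Fin d),
      IsUnitDistRep (SimpleGraph.completeGraph (Fin n)) u ∧ r = quadSum A u}
    have hmem : quadSum A u₀ ∈ S := ⟨u₀, isUnitDistRep_completeGraph_iff.mpr hu₀, rfl⟩
    have hlb : ∀ r ∈ S, _ ≤ r := fun r ⟨u, hu, hr⟩ =>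
      hr ▸ le_quadSum hA (isUnitDistRep_completeGraph_iff.mp hu)
    exact le_antisymm ((csInf_le ⟨_, hlb⟩ hmem).trans hle) (le_csInf ⟨_, hmem⟩ hlb)
  · have := card_sub_one_le_finrank (isUnitDistRep_completeGraph_iff.mp hu)
    rw [Fintype.card_fin, finrank_euclideanSpace_fin] at this
    omega
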